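/- Suppose α > 0, S_v > S_g > 0, and distances satisfy the triangle inequality d_ag ≤ d_av + d_gv. If a stealthy attack is feasible, i.e., d_av^α·S_v < d_ag^α·S_g, then d_av < d_gv / ((S_v/S_g)^(1/α) − 1). -/

import Mathlib

/-!
Put `r = (S_v / S_g) ^ (1 / α) > 1`. Taking `α`-th roots, feasibility says exactly that
`r * d_av < d_ag`, and the triangle inequality turns this into `(r - 1) * d_av < d_gv`.
-/

namespace Real

theorem rpow_mul_lt_rpow_iff {x y c α : ℝ} (hx : 0 ≤ x) (hy : 0 ≤ y) (hc : 0 ≤ c) (hα : 0 < α) :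
    x ^ α * c < y ^ α ↔ x * c ^ (1 / α) < y := by
  have hroot : (x * c ^ (1 / α)) ^ α = x ^ α * c := by
    rw [mul_rpow hx (by positivity), one_div, rpow_inv_rpow hc hα.ne']
  rw [← rpow_lt_rpow_iff (by positivity) hy hα, hroot]

end Real

theorem stealthy_attack_range_bound_general
    (dav dag dgv Sv Sg α : ℝ)
    (hdav : 0 < dav) (hdag : 0 < dag)
    (hSg : 0 < Sg) (hSv : Sg < Sv) (hα : 0 < α)
    (htri : dag ≤ dav + dgv)
    (hfeas : dav ^ α * Sv < dag ^ α * Sg) :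
    dav < dgv / ((Sv / Sg) ^ (1 / α) - 1) := by
  set r := (Sv / Sg) ^ (1 / α)
  have hr : 1 < r := Real.one_lt_rpow ((one_lt_div hSg).mpr hSv) (by positivity)
  have hscaled : dav * r < dag := by
    refine (Real.rpow_mul_lt_rpow_iff hdav.le hdag.le (div_pos (hSg.trans hSv) hSg).le hα).mp ?_
    rwa [← mul_div_assoc, div_lt_iff₀ hSg]
  rw [lt_div_iff₀ (sub_pos.mpr hr)]
  linarith

/-- If a stealthy attack is feasible then
`d_av < d_gv / ((S_v/S_g)^(1/α) − 1)`. -/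
theorem stealthy_attack_range_bound
    (dav dag dgv Sv Sg α : ℝ)
    (hdav : 0 < dav) (hdag : 0 < dag) (hdgv : 0 < dgv)
    (hSg : 0 < Sg) (hSv : Sg < Sv) (hα : 0 < α)
    (htri : dag ≤ dav + dgv)
    (hfeas : dav ^ α * Sv < dag ^ α * Sg) :
    dav < dgv / ((Sv / Sg) ^ (1 / α) - 1) :=
  stealthy_attack_range_bound_general dav dag dgv Sv Sg α hdav hdag hSg hSv hα htri hfeas
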